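/- L¹ bound for the Hermite-type reconstruction (Lemma 4.5, eq. (4.12a)): the Hermite-type reconstruction W satisfies ∫_a^b ‖V(t) − W(t)‖_H dt ≤ (τ/4)·(‖j_a‖_H + ‖j_b‖_H). -/
import Mathlib


open scoped RealInnerProductSpace
open MeasureTheory

/-- First cubic Hermite basis function on `[a, b]`:
`φ₁(t) = 2((t-a)/(b-a))³ - 3((t-a)/(b-a))² + 1`. -/
noncomputable def hermite1 (a b t : ℝ) : ℝ :=
  2 * ((t - a) / (b - a)) ^ 3 - 3 * ((t - a) / (b - a)) ^ 2 + 1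

/-- Second cubic Hermite basis function on `[a, b]`:
`φ₂(t) = -2((t-a)/(b-a))³ + 3((t-a)/(b-a))²`. -/
noncomputable def hermite2 (a b t : ℝ) : ℝ :=
  -2 * ((t - a) / (b - a)) ^ 3 + 3 * ((t - a) / (b - a)) ^ 2

/-- Evaluation of the `H`-valued polynomial with coefficients `c` (degree at most `k`):
`t ↦ ∑_{i=0}^{k} tⁱ • c i`. -/
noncomputable def polyEval {H : Type*} [NormedAddCommGroup H] [NormedSpace ℝ H]
    (k : ℕ) (c : ℕ → H) (t : ℝ) : H :=
  ∑ i ∈ Finset.range (k + 1), t ^ i • c i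

/-- Coefficients of the termwise derivative of the polynomial with coefficients `c`. -/
noncomputable def dC {H : Type*} [NormedAddCommGroup H] [NormedSpace ℝ H]
    (c : ℕ → H) : ℕ → H := fun i => ((i : ℝ) + 1) • c (i + 1)

/-- The Hermite-type reconstruction on `[a, b]` of the polynomial with coefficients `c`
with jumps `ja` (at `a`) and `jb` (at `b`): `W = V - (ja/2)·φ₁ + (jb/2)·φ₂`. -/
noncomputable def hermRecon {H : Type*} [NormedAddCommGroup H] [NormedSpace ℝ H]
    (k : ℕ) (c : ℕ → H) (ja jb : H) (a b : ℝ) (t : ℝ) : H :=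
  polyEval k c t - (hermite1 a b t / 2) • ja + (hermite2 a b t / 2) • jb

lemma int_pow_sub (a b : ℝ) (n : ℕ) :
    ∫ t in a..b, (t - a) ^ n = (b - a) ^ (n + 1) / (n + 1) := by
  have := intervalIntegral.integral_comp_sub_right (a := a) (b := b) (fun s => s ^ n) a
  rw [this]
  simp [integral_pow]

lemma int_hermite (a b : ℝ) (hab : a < b) (p q r : ℝ) :
    ∫ t in a..b, (p * ((t - a) / (b - a)) ^ 3 + q * ((t - a) / (b - a)) ^ 2 + r)
      = (b - a) * (p / 4 + q / 3 + r) := by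
  have hτ : b - a ≠ 0 := by linarith
  have e : ∀ t : ℝ, p * ((t - a) / (b - a)) ^ 3 + q * ((t - a) / (b - a)) ^ 2 + r
      = (p / (b - a) ^ 3) * (t - a) ^ 3 + (q / (b - a) ^ 2) * (t - a) ^ 2 + r := by
    intro t; field_simp
  simp_rw [e]
  have i3 : IntervalIntegrable (fun t : ℝ => (p / (b - a) ^ 3) * (t - a) ^ 3)
      MeasureTheory.volume a b := (Continuous.intervalIntegrable (by fun_prop) a b)
  have i2 : IntervalIntegrable (fun t : ℝ => (q / (b - a) ^ 2) * (t - a) ^ 2)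
      MeasureTheory.volume a b := (Continuous.intervalIntegrable (by fun_prop) a b)
  rw [intervalIntegral.integral_add (i3.add i2) (intervalIntegrable_const : IntervalIntegrable (fun _ => r) MeasureTheory.volume a b),
    intervalIntegral.integral_add i3 i2,
    intervalIntegral.integral_const_mul, intervalIntegral.integral_const_mul,
    int_pow_sub, int_pow_sub]
  simp only [intervalIntegral.integral_const, smul_eq_mul]
  field_simp
  ring

lemma hermite1_nonneg (a b t : ℝ) (hab : a < b) (h1 : a ≤ t) (h2 : t ≤ b) :
    0 ≤ hermite1 a b t := by
  have hτ : 0 < b - a := by linarith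
  set s := (t - a) / (b - a) with hs
  have hs0 : 0 ≤ s := div_nonneg (by linarith) hτ.le
  have hs1 : s ≤ 1 := (div_le_one hτ).mpr (by linarith)
  have : hermite1 a b t = (1 - s) ^ 2 * (1 + 2 * s) := by
    unfold hermite1; rw [← hs]; ring
  rw [this]; positivity

lemma hermite2_nonneg (a b t : ℝ) (hab : a < b) (h1 : a ≤ t) (h2 : t ≤ b) :
    0 ≤ hermite2 a b t := by
  have hτ : 0 < b - a := by linarith
  set s := (t - a) / (b - a) with hs
  have hs0 : 0 ≤ s := div_nonneg (by linarith) hτ.le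
  have hs1 : s ≤ 1 := (div_le_one hτ).mpr (by linarith)
  have : hermite2 a b t = s ^ 2 * (3 - 2 * s) := by
    unfold hermite2; rw [← hs]; ring
  rw [this]
  nlinarith

/-- L¹ bound for the Hermite-type reconstruction (Lemma 4.5, eq. (4.12a)):
`∫_a^b ‖V - W‖ ≤ (τ/4)(‖j_a‖ + ‖j_b‖)`. -/
theorem hermite_reconstruction_L1_bound
    {H : Type*} [NormedAddCommGroup H] [NormedSpace ℝ H]
    (a b : ℝ) (hab : a < b) (k : ℕ) (c : ℕ → H) (hc : ∀ i, k < i → c i = 0)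
    (A B : H) :
    (∫ t in a..b,
        ‖polyEval k c t - hermRecon k c (polyEval k c a - A) (B - polyEval k c b) a b t‖)
      ≤ (b - a) / 4 * (‖polyEval k c a - A‖ + ‖B - polyEval k c b‖) := by
  set ja := polyEval k c a - A with hja
  set jb := B - polyEval k c b with hjb
  have hdiff : ∀ t : ℝ, polyEval k c t - hermRecon k c ja jb a b t
      = (hermite1 a b t / 2) • ja - (hermite2 a b t / 2) • jb := by
    intro t; unfold hermRecon; abel
  have hbound : ∀ t ∈ Set.Icc a b,
      ‖polyEval k c t - hermRecon k c ja jb a b t‖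
        ≤ hermite1 a b t / 2 * ‖ja‖ + hermite2 a b t / 2 * ‖jb‖ := by
    intro t ht
    rw [hdiff t]
    calc ‖(hermite1 a b t / 2) • ja - (hermite2 a b t / 2) • jb‖
        ≤ ‖(hermite1 a b t / 2) • ja‖ + ‖(hermite2 a b t / 2) • jb‖ := norm_sub_le _ _
      _ = |hermite1 a b t / 2| * ‖ja‖ + |hermite2 a b t / 2| * ‖jb‖ := by
          rw [norm_smul, norm_smul]; rfl
      _ = hermite1 a b t / 2 * ‖ja‖ + hermite2 a b t / 2 * ‖jb‖ := by
          rw [abs_of_nonneg (by have := hermite1_nonneg a b t hab ht.1 ht.2; linarith),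
            abs_of_nonneg (by have := hermite2_nonneg a b t hab ht.1 ht.2; linarith)]
  have hcont : Continuous fun t => polyEval k c t - hermRecon k c ja jb a b t := by
    simp only [hdiff]
    unfold hermite1 hermite2
    fun_prop
  have hint : ∫ t in a..b, (hermite1 a b t / 2 * ‖ja‖ + hermite2 a b t / 2 * ‖jb‖)
      = (b - a) / 4 * (‖ja‖ + ‖jb‖) := by
    have e : ∀ t : ℝ, hermite1 a b t / 2 * ‖ja‖ + hermite2 a b t / 2 * ‖jb‖
        = (‖ja‖ - ‖jb‖) * ((t - a) / (b - a)) ^ 3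
          + (-(3/2) * ‖ja‖ + (3/2) * ‖jb‖) * ((t - a) / (b - a)) ^ 2 + ‖ja‖ / 2 := by
      intro t; unfold hermite1 hermite2; ring
    simp_rw [e]
    rw [int_hermite a b hab]
    ring
  calc (∫ t in a..b, ‖polyEval k c t - hermRecon k c ja jb a b t‖)
      ≤ ∫ t in a..b, (hermite1 a b t / 2 * ‖ja‖ + hermite2 a b t / 2 * ‖jb‖) := by
        apply intervalIntegral.integral_mono_on hab.le
        · exact (hcont.norm).intervalIntegrable a b
        · apply Continuous.intervalIntegrable
          unfold hermite1 hermite2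
          fun_prop
        · exact hbound
    _ = (b - a) / 4 * (‖ja‖ + ‖jb‖) := hint
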